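/- Let p_t(x) = (2πσ_t²)^{−d/2} exp(−‖x−μ_t‖²/(2σ_t²)) with μ_t = t·x₁+(1−t)·x₀ and σ_t² = σ²t(1−t). Define u_t(x) = ((1−2t)/(2t(1−t)))·(x−μ_t) + (x₁−x₀). Then p_t and u_t satisfy the continuity equation ∂_t p_t(x) + ∇·(p_t(x) u_t(x)) = 0 on ℝᵈ × (0,1). -/

import Mathlib

open Real

/-- Divergence of a vector field on `ℝᵈ`: sum of partial derivatives of the coordinates. -/
noncomputable def vdiv {d : ℕ} (F : EuclideanSpace ℝ (Fin d) → EuclideanSpace ℝ (Fin d))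
    (x : EuclideanSpace ℝ (Fin d)) : ℝ :=
  ∑ i, fderiv ℝ (fun y => F y i) x (EuclideanSpace.single i 1)

/-!
An isotropic Gaussian `p = (2πv)^(-d/2) exp(-‖x - m‖² / 2v)` with moving mean `m` and variance `v`
has `∂ₜp = p (-d v'/2v + ⟪x - m, m'⟫/v + ‖x - m‖² v'/2v²)`, while for an affine field
`u = a (x - m) + w` one has `∇·(p u) = p ∇·u + ∇p·u = p (d a - ⟪x - m, a (x - m) + w⟫/v)`.
The two cancel exactly when `a = v'/2v` and `w = m'`. For the Brownian bridge `m = μₜ` and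
`v = σ²t(1-t)`, so `v'/2v = (1-2t)/(2t(1-t))` and `m' = x₁ - x₀`.
-/

open RealInnerProductSpace

/-- The density of `𝒩(m, v • I)` when `k` is the dimension of `E` and `0 < v`. -/
noncomputable def isoGaussianDensity {E : Type*} [NormedAddCommGroup E] (k : ℝ) (m : E) (v : ℝ)
    (x : E) : ℝ :=
  (2 * π * v) ^ (-k / 2) * exp (-‖x - m‖ ^ 2 / (2 * v))

section Gaussian

variable {E : Type*} [NormedAddCommGroup E] [InnerProductSpace ℝ E]

theorem hasFDerivAt_isoGaussianDensity (k : ℝ) (m : E) (v : ℝ) (x : E) :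
    HasFDerivAt (isoGaussianDensity k m v)
      (-(isoGaussianDensity k m v x / v) • innerSL ℝ (x - m)) x := by
  have hq := ((hasFDerivAt_id x).sub_const m).norm_sq.const_mul (-(2 * v)⁻¹)
  have hexponent :
      (fun y => -(2 * v)⁻¹ * ‖id y - m‖ ^ 2) = fun y => -‖y - m‖ ^ 2 / (2 * v) := by
    ext y
    rw [id_eq]
    ring
  rw [hexponent] at hq
  refine (hq.exp.const_mul ((2 * π * v) ^ (-k / 2))).congr_fderiv ?_
  ext y
  simp only [isoGaussianDensity, id_eq, ContinuousLinearMap.comp_id, smul_apply,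
    coe_innerSL_apply, nsmul_eq_mul, smul_eq_mul]
  ring

theorem hasDerivAt_isoGaussianDensity_of_hasDerivAt (k : ℝ) {m : ℝ → E} {v : ℝ → ℝ} {m' : E}
    {v' t : ℝ}
    (hm : HasDerivAt m m' t) (hv : HasDerivAt v v' t) (hv0 : v t ≠ 0) (x : E) :
    HasDerivAt (fun s => isoGaussianDensity k (m s) (v s) x)
      (isoGaussianDensity k (m t) (v t) x *
        (-(k / 2) * v' / v t + ⟪x - m t, m'⟫ / v t + ‖x - m t‖ ^ 2 * v' / (2 * v t ^ 2))) t := by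
  have hc := (hv.const_mul (2 * π)).rpow_const (p := -k / 2) (Or.inl (by positivity))
  have he := ((hm.const_sub x).norm_sq.fun_neg.fun_div (hv.const_mul 2) (by positivity)).exp
  refine (hc.fun_mul he).congr_deriv ?_
  simp only [isoGaussianDensity, inner_neg_right,
    rpow_sub_one (show 2 * π * v t ≠ 0 by positivity)]
  field_simp
  ring

end Gaussian

section Divergence

variable {d : ℕ}

theorem vdiv_smul {f : EuclideanSpace ℝ (Fin d) → ℝ}
    {F : EuclideanSpace ℝ (Fin d) → EuclideanSpace ℝ (Fin d)} {x : EuclideanSpace ℝ (Fin d)}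
    (hf : DifferentiableAt ℝ f x) (hF : DifferentiableAt ℝ F x) :
    vdiv (fun y => f y • F y) x = f x * vdiv F x + fderiv ℝ f x (F x) := by
  have hFi : ∀ i, DifferentiableAt ℝ (fun y => F y i) x := fun i =>
    (EuclideanSpace.proj (𝕜 := ℝ) i).differentiableAt.comp x hF
  have hcoord : ∀ i, fderiv ℝ (fun y => (f y • F y) i) x (EuclideanSpace.single i 1) =
      f x * fderiv ℝ (fun y => F y i) x (EuclideanSpace.single i 1) +
        F x i * fderiv ℝ f x (EuclideanSpace.single i 1) := by
    intro i
    simp only [PiLp.smul_apply, smul_eq_mul, fderiv_fun_mul hf (hFi i),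
      add_apply, smul_apply]
  have hF_expand : F x = ∑ i, F x i • EuclideanSpace.single i (1 : ℝ) := by
    simpa using ((EuclideanSpace.basisFun (Fin d) ℝ).sum_repr (F x)).symm
  simp only [vdiv, hcoord, Finset.sum_add_distrib, ← Finset.mul_sum]
  conv_rhs => rw [hF_expand, map_sum]
  simp only [map_smul, smul_eq_mul]

theorem vdiv_smul_sub_add_const (a : ℝ) (m w x : EuclideanSpace ℝ (Fin d)) :
    vdiv (fun y => a • (y - m) + w) x = d * a := by
  have hcoord : ∀ i, HasFDerivAt (fun y : EuclideanSpace ℝ (Fin d) => (a • (y - m) + w) i)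
      (a • EuclideanSpace.proj (𝕜 := ℝ) (ι := Fin d) i) x := by
    intro i
    have hfun : (fun y : EuclideanSpace ℝ (Fin d) => (a • (y - m) + w) i) =
        fun y => a * (EuclideanSpace.proj (𝕜 := ℝ) i y - m i) + w i := by
      ext y
      simp
    rw [hfun]
    have hproj := (EuclideanSpace.proj (𝕜 := ℝ) (ι := Fin d) i).hasFDerivAt (x := x)
    exact ((hproj.sub_const (m i)).const_mul a).add_const (w i)
  calc vdiv (fun y => a • (y - m) + w) x = ∑ _i : Fin d, a :=
        Finset.sum_congr rfl fun i _ => by rw [(hcoord i).fderiv]; simp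
    _ = d * a := by simp

end Divergence

theorem isoGaussianDensity_continuity_equation {d : ℕ} {m : ℝ → EuclideanSpace ℝ (Fin d)}
    {v : ℝ → ℝ} {m' : EuclideanSpace ℝ (Fin d)} {v' t : ℝ}
    (hm : HasDerivAt m m' t) (hv : HasDerivAt v v' t) (hv0 : v t ≠ 0)
    (x : EuclideanSpace ℝ (Fin d)) :
    deriv (fun s => isoGaussianDensity d (m s) (v s) x) t +
      vdiv (fun y => isoGaussianDensity d (m t) (v t) y •
        ((v' / (2 * v t)) • (y - m t) + m')) x = 0 := by
  have hF : DifferentiableAt ℝ (fun y => (v' / (2 * v t)) • (y - m t) + m') x := by fun_prop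
  rw [(hasDerivAt_isoGaussianDensity_of_hasDerivAt d hm hv hv0 x).deriv,
    vdiv_smul (hasFDerivAt_isoGaussianDensity d (m t) (v t) x).differentiableAt hF,
    vdiv_smul_sub_add_const, (hasFDerivAt_isoGaussianDensity d (m t) (v t) x).fderiv]
  simp only [smul_apply, innerSL_apply_apply, inner_add_right, inner_smul_right,
    real_inner_self_eq_norm_sq, smul_eq_mul]
  field_simp
  ring

/-- The Brownian-bridge Gaussian marginals
`p_t = N(μ_t, σ_t²·I)` with `μ_t = t·x₁+(1−t)·x₀`, `σ_t² = σ²t(1−t)` and the drift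
`u_t(x) = ((1−2t)/(2t(1−t)))·(x−μ_t) + (x₁−x₀)` satisfy the continuity equation
`∂_t p_t(x) + ∇·(p_t(x) u_t(x)) = 0` on `ℝᵈ × (0,1)`. -/
theorem brownian_bridge_continuity_equation
    (d : ℕ) (x₀ x₁ : EuclideanSpace ℝ (Fin d)) (σ : ℝ) (hσ : 0 < σ)
    (μ : ℝ → EuclideanSpace ℝ (Fin d))
    (p : ℝ → EuclideanSpace ℝ (Fin d) → ℝ)
    (u : ℝ → EuclideanSpace ℝ (Fin d) → EuclideanSpace ℝ (Fin d))
    (hμ : μ = fun t => t • x₁ + (1 - t) • x₀)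
    (hp : p = fun t x => (2 * π * (σ ^ 2 * t * (1 - t))) ^ (-(d : ℝ) / 2) *
      Real.exp (-‖x - μ t‖ ^ 2 / (2 * (σ ^ 2 * t * (1 - t)))))
    (hu : u = fun t x => ((1 - 2 * t) / (2 * t * (1 - t))) • (x - μ t) + (x₁ - x₀)) :
    ∀ t ∈ Set.Ioo (0 : ℝ) 1, ∀ x,
      deriv (fun s => p s x) t + vdiv (fun y => p t y • u t y) x = 0 := by
  rintro t ⟨ht0, ht1⟩ x
  subst hμ hp hu
  have hmean : HasDerivAt (fun s : ℝ => s • x₁ + (1 - s) • x₀) (x₁ - x₀) t := by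
    simpa [sub_eq_add_neg] using
      ((hasDerivAt_id t).smul_const x₁).fun_add (((hasDerivAt_id t).const_sub 1).smul_const x₀)
  have hvar : HasDerivAt (fun s => σ ^ 2 * s * (1 - s)) (σ ^ 2 * (1 - 2 * t)) t := by
    refine (((hasDerivAt_id t).const_mul (σ ^ 2)).fun_mul
      ((hasDerivAt_id t).const_sub 1)).congr_deriv ?_
    simp only [id_eq]
    ring
  have hvar0 : σ ^ 2 * t * (1 - t) ≠ 0 := by
    have : 0 < 1 - t := by linarith
    positivity
  have hdrift : (1 - 2 * t) / (2 * t * (1 - t)) =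
      σ ^ 2 * (1 - 2 * t) / (2 * (σ ^ 2 * t * (1 - t))) := by
    field_simp
  beta_reduce
  rw [hdrift]
  exact isoGaussianDensity_continuity_equation hmean hvar hvar0 x
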